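/- An ordered field F satisfies the least upper bound property if and only if Taylor's Theorem with Peano Remainder holds in F: for every n ∈ ℕ and every f : F → F that is n times differentiable at a, lim_{x→a} (f(x) − Σ_{k=0}^{n} f^{(k)}(a)/k! · (x−a)^k)/(x−a)^n = 0. -/

import Mathlib

/-!
With the least upper bound property, a supremum argument shows that a function whose derivative
is bounded by `M` on an interval moves by at most `M` times its length. The derivative of the
remainder `f - T_{n+1} f` is the order-`n` remainder of `f'`, so this mean value inequality turns
`o((x - a) ^ n)` for the latter into `o((x - a) ^ (n + 1))` for the former, and Peano's form of
Taylor's theorem follows by induction on `n`.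

Conversely, suppose some bounded nonempty set has no supremum. Split the positive elements into
open classes that shrink towards `0`, and let `f` be `r ^ 2` on the class of `r`, for a chosen
representative `r`, and `0` elsewhere. Then `f` has derivative `0` everywhere, but `f r = r ^ 2`
for arbitrarily small `r`, so the second-order Taylor remainder is not `o(x ^ 2)`. In an
Archimedean field the classes are cut out by the multiples of the missing supremum; in a
non-Archimedean field they are the Archimedean classes.
-/

open Filter Topology

/-- The derivative of `f : F → F` at `a` in the order topology. -/
def HasDerivO {F : Type*} [Field F] [LinearOrder F] [IsStrictOrderedRing F] [TopologicalSpace F]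
    (f : F → F) (L a : F) : Prop :=
  Tendsto (fun x => (f x - f a) / (x - a)) (𝓝[≠] a) (𝓝 L)

/-- `f` is `n` times differentiable at `a` with derivatives recorded in `D`. -/
def HasNDerivAt {F : Type*} [Field F] [LinearOrder F] [IsStrictOrderedRing F] [TopologicalSpace F]
    (n : ℕ) (f : F → F) (D : ℕ → F → F) (a : F) : Prop :=
  D 0 = f ∧
  ∃ U ∈ 𝓝 a, (∀ k, k + 1 < n → ∀ x ∈ U, HasDerivO (D k) (D (k + 1) x) x) ∧
    HasDerivO (D (n - 1)) (D n a) a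

open Set

theorem IsClopen.eventually_mem_iff {X : Type*} [TopologicalSpace X] {L : Set X}
    (hL : IsClopen L) (x : X) : ∀ᶠ y in 𝓝 x, (y ∈ L ↔ x ∈ L) := by
  by_cases hx : x ∈ L
  · filter_upwards [hL.isOpen.mem_nhds hx] with y hy using iff_of_true hy hx
  · filter_upwards [hL.compl.isOpen.mem_nhds hx] with y hy using iff_of_false hy hx

theorem eventually_forall_mem_uIcc {α : Type*} [LinearOrder α] [TopologicalSpace α]
    [OrderTopology α] [NoMaxOrder α] [NoMinOrder α] {x : α} {p : α → Prop}
    (h : ∀ᶠ w in 𝓝 x, p w) : ∀ᶠ y in 𝓝 x, ∀ w ∈ uIcc x y, p w := by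
  obtain ⟨l, u, hx, hsub⟩ := mem_nhds_iff_exists_Ioo_subset.1 h
  filter_upwards [Ioo_mem_nhds hx.1 hx.2] with y hy w hw
  exact hsub (ordConnected_Ioo.uIcc_subset hx hy hw)

section TaylorSum

variable {F : Type*} [Field F]

def taylorSum (D : ℕ → F → F) (a : F) (n : ℕ) (x : F) : F :=
  ∑ k ∈ Finset.range (n + 1), D k a / (k.factorial : F) * (x - a) ^ k

theorem taylorSum_self (D : ℕ → F → F) (a : F) (n : ℕ) : taylorSum D a n a = D 0 a := by
  simp [taylorSum, Finset.sum_range_succ']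

end TaylorSum

section Peano

variable {F : Type*} [Field F] [LinearOrder F] [IsStrictOrderedRing F] [TopologicalSpace F]
  {f g : F → F} {L M x : F}

theorem hasDerivO_zero_of_eventually_eq (h : ∀ᶠ y in 𝓝 x, f y = f x) : HasDerivO f 0 x :=
  tendsto_const_nhds.congr' <|
    (eventually_nhdsWithin_of_eventually_nhds h).mono fun y hy => by simp [hy]

theorem hasDerivO_id (x : F) : HasDerivO (fun y => y) 1 x :=
  tendsto_const_nhds.congr' <| eventually_nhdsWithin_of_forall fun _ hy =>
    (div_self (sub_ne_zero.2 hy)).symm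

theorem HasNDerivAt.tail {n : ℕ} {D : ℕ → F → F} {a : F} (hD : HasNDerivAt (n + 1) f D a)
    (hn : 1 ≤ n) : HasNDerivAt n (D 1) (fun k => D (k + 1)) a := by
  obtain ⟨-, U, hU, hchain, hlast⟩ := hD
  refine ⟨rfl, U, hU, fun k hk => hchain (k + 1) (by omega), ?_⟩
  convert hlast using 2
  omega

theorem HasNDerivAt.eventually_hasDerivO {n : ℕ} {D : ℕ → F → F} {a : F}
    (hD : HasNDerivAt (n + 1) f D a) (hn : 1 ≤ n) : ∀ᶠ x in 𝓝 a, HasDerivO f (D 1 x) x := by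
  obtain ⟨rfl, U, hU, hchain, -⟩ := hD
  filter_upwards [hU] with x hx using hchain 0 (by omega) x hx

variable [OrderTopology F]

theorem HasDerivO.add (hf : HasDerivO f L x) (hg : HasDerivO g M x) :
    HasDerivO (fun y => f y + g y) (L + M) x :=
  (Filter.Tendsto.add hf hg).congr fun y => by ring

theorem HasDerivO.sub (hf : HasDerivO f L x) (hg : HasDerivO g M x) :
    HasDerivO (fun y => f y - g y) (L - M) x :=
  (Filter.Tendsto.sub hf hg).congr fun y => by ring

theorem HasDerivO.const_mul (c : F) (hf : HasDerivO f L x) :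
    HasDerivO (fun y => c * f y) (c * L) x :=
  (Filter.Tendsto.const_mul c hf).congr fun y => by ring

theorem HasDerivO.sum {ι : Type*} (s : Finset ι) {f : ι → F → F} {L : ι → F}
    (hf : ∀ i ∈ s, HasDerivO (f i) (L i) x) :
    HasDerivO (fun y => ∑ i ∈ s, f i y) (∑ i ∈ s, L i) x :=
  (tendsto_finsetSum s hf).congr fun y => by rw [← Finset.sum_div, Finset.sum_sub_distrib]

theorem hasDerivO_sub_pow (b : F) (k : ℕ) (x : F) :
    HasDerivO (fun y => (y - b) ^ k) (k * (x - b) ^ (k - 1)) x := by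
  have hcont : Tendsto (fun y => ∑ i ∈ Finset.range k, (y - b) ^ i * (x - b) ^ (k - 1 - i))
      (𝓝[≠] x) (𝓝 (∑ i ∈ Finset.range k, (x - b) ^ i * (x - b) ^ (k - 1 - i))) :=
    (Continuous.tendsto (by fun_prop) x).mono_left nhdsWithin_le_nhds
  have hval : ∑ i ∈ Finset.range k, (x - b) ^ i * (x - b) ^ (k - 1 - i) =
      k * (x - b) ^ (k - 1) := by
    rw [Finset.sum_congr rfl fun i hi => by
      rw [← pow_add, Nat.add_sub_cancel' (Nat.le_sub_one_of_lt (Finset.mem_range.1 hi))]]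
    rw [Finset.sum_const, Finset.card_range, nsmul_eq_mul]
  rw [hval] at hcont
  refine hcont.congr' (eventually_nhdsWithin_of_forall fun y hy => ?_)
  rw [eq_div_iff (sub_ne_zero.2 hy), ← geom_sum₂_mul]
  ring

theorem hasDerivO_taylorSum (D : ℕ → F → F) (a : F) (n : ℕ) (x : F) :
    HasDerivO (taylorSum D a (n + 1)) (taylorSum (fun k => D (k + 1)) a n x) x := by
  convert HasDerivO.sum (Finset.range (n + 1 + 1)) fun k _ =>
    (hasDerivO_sub_pow a k x).const_mul (D k a / k.factorial) using 1
  · rfl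
  rw [taylorSum, Finset.sum_range_succ' _ (n + 1)]
  simp only [Nat.cast_zero, mul_zero, zero_mul, add_zero, Nat.factorial_succ, Nat.cast_mul,
    add_tsub_cancel_right]
  refine Finset.sum_congr rfl fun k _ => ?_
  field_simp

theorem HasDerivO.eventually_lt_of_pos (hf : HasDerivO f L x) (hL : 0 < L) :
    (∀ᶠ y in 𝓝[<] x, f y < f x) ∧ ∀ᶠ y in 𝓝[>] x, f x < f y := by
  have hslope : ∀ᶠ y in 𝓝[≠] x, 0 < (f y - f x) / (y - x) := hf.eventually (lt_mem_nhds hL)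
  constructor
  · filter_upwards [hslope.filter_mono (nhdsWithin_mono _ fun y hy => ne_of_lt hy),
      self_mem_nhdsWithin] with y hy (hyx : y < x)
    linarith [(lt_div_iff_of_neg (sub_neg.2 hyx)).1 hy]
  · filter_upwards [hslope.filter_mono (nhdsWithin_mono _ fun y hy => ne_of_gt hy),
      self_mem_nhdsWithin] with y hy (hxy : x < y)
    linarith [(div_pos_iff_of_pos_right (sub_pos.2 hxy)).1 hy]

theorem le_of_hasDerivO_pos (hlub : ∀ A : Set F, A.Nonempty → BddAbove A → ∃ s, IsLUB A s)
    {f' : F → F} {s t : F} (hst : s ≤ t) (hder : ∀ u ∈ Icc s t, HasDerivO f (f' u) u)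
    (hpos : ∀ u ∈ Icc s t, 0 < f' u) : f s ≤ f t := by
  set S := {u ∈ Icc s t | f s ≤ f u}
  have hsS : s ∈ S := ⟨left_mem_Icc.2 hst, le_rfl⟩
  obtain ⟨σ, hσ⟩ := hlub S ⟨s, hsS⟩ ⟨t, fun u hu => hu.1.2⟩
  have hσI : σ ∈ Icc s t := ⟨hσ.1 hsS, hσ.2 fun u hu => hu.1.2⟩
  obtain ⟨hleft, hright⟩ := (hder σ hσI).eventually_lt_of_pos (hpos σ hσI)
  have hσS : σ ∈ S := by
    by_contra hσS
    obtain ⟨l, hlσ, hsub⟩ := mem_nhdsLT_iff_exists_Ioo_subset.1 hleft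
    obtain ⟨c, hcS, hlc, hcσ⟩ := hσ.exists_between' hσS hlσ
    exact hσS ⟨hσI, hcS.2.trans (hsub ⟨hlc, hcσ⟩).le⟩
  obtain rfl | hσt := hσI.2.eq_or_lt
  · exact hσS.2
  obtain ⟨u, hu, hσu⟩ := (hright.and (Ioc_mem_nhdsGT hσt)).exists
  exact ((hσ.1 ⟨⟨hσI.1.trans hσu.1.le, hσu.2⟩, hσS.2.trans hu.le⟩).not_gt hσu.1).elim

theorem abs_sub_le_of_hasDerivO_of_abs_lt
    (hlub : ∀ A : Set F, A.Nonempty → BddAbove A → ∃ s, IsLUB A s) {f' : F → F} {s t : F}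
    (hder : ∀ u ∈ uIcc s t, HasDerivO f (f' u) u) (hbd : ∀ u ∈ uIcc s t, |f' u| < M) :
    |f t - f s| ≤ M * |t - s| := by
  wlog hst : s ≤ t generalizing s t
  · rw [abs_sub_comm, abs_sub_comm t]
    exact this (uIcc_comm s t ▸ hder) (uIcc_comm s t ▸ hbd) (le_of_not_ge hst)
  rw [uIcc_of_le hst] at hder hbd
  have hup := le_of_hasDerivO_pos hlub hst
    (fun u hu => ((hasDerivO_id u).const_mul M).sub (hder u hu))
    (fun u hu => by linarith [(abs_lt.1 (hbd u hu)).2])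
  have hlow := le_of_hasDerivO_pos hlub hst
    (fun u hu => ((hasDerivO_id u).const_mul M).add (hder u hu))
    (fun u hu => by linarith [(abs_lt.1 (hbd u hu)).1])
  rw [abs_of_nonneg (sub_nonneg.2 hst), abs_le]
  constructor <;> linarith

theorem tendsto_div_pow_succ_of_hasDerivO
    (hlub : ∀ A : Set F, A.Nonempty → BddAbove A → ∃ s, IsLUB A s) {R R' : F → F} {a : F} {n : ℕ}
    (hRa : R a = 0) (hR'a : R' a = 0) (hder : ∀ᶠ x in 𝓝 a, HasDerivO R (R' x) x)
    (hR' : Tendsto (fun x => R' x / (x - a) ^ n) (𝓝[≠] a) (𝓝 0)) :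
    Tendsto (fun x => R x / (x - a) ^ (n + 1)) (𝓝[≠] a) (𝓝 0) := by
  rw [LinearOrderedAddCommGroup.tendsto_nhds] at hR' ⊢
  intro ε hε
  have hnear : ∀ᶠ w in 𝓝 a, HasDerivO R (R' w) w ∧ (w ≠ a → |R' w / (w - a) ^ n - 0| < ε / 2) :=
    hder.and (eventually_nhdsWithin_iff.1 (hR' _ (half_pos hε)))
  filter_upwards [eventually_nhdsWithin_of_eventually_nhds (eventually_forall_mem_uIcc hnear),
    self_mem_nhdsWithin] with x hx (hxa : x ≠ a)
  have hbound : ∀ w ∈ uIcc a x, |R' w| < ε / 2 * |x - a| ^ n := by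
    intro w hw
    rcases eq_or_ne w a with rfl | hwa
    · rw [hR'a, abs_zero]
      exact mul_pos (half_pos hε) (pow_pos (abs_pos.2 (sub_ne_zero.2 hxa)) n)
    have hw' := (hx w hw).2 hwa
    rw [sub_zero, abs_div, abs_pow, div_lt_iff₀ (pow_pos (abs_pos.2 (sub_ne_zero.2 hwa)) n)] at hw'
    exact hw'.trans_le (mul_le_mul_of_nonneg_left
      (pow_le_pow_left₀ (abs_nonneg _) (abs_sub_left_of_mem_uIcc hw) n) (half_pos hε).le)
  have hmvt := abs_sub_le_of_hasDerivO_of_abs_lt hlub (fun w hw => (hx w hw).1) hbound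
  have hpos : 0 < |x - a| ^ n * |x - a| := by
    have := abs_pos.2 (sub_ne_zero.2 hxa)
    positivity
  rw [hRa, sub_zero] at hmvt
  rw [sub_zero, abs_div, abs_pow, div_lt_iff₀ (by positivity), pow_succ]
  calc |R x| ≤ ε / 2 * |x - a| ^ n * |x - a| := hmvt
    _ < ε * (|x - a| ^ n * |x - a|) := by nlinarith

theorem tendsto_taylorSum_peano (hlub : ∀ A : Set F, A.Nonempty → BddAbove A → ∃ s, IsLUB A s)
    {n : ℕ} (hn : 1 ≤ n) {D : ℕ → F → F} {a : F} (hD : HasNDerivAt n f D a) :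
    Tendsto (fun x => (f x - taylorSum D a n x) / (x - a) ^ n) (𝓝[≠] a) (𝓝 0) := by
  induction n, hn using Nat.le_induction generalizing f D with
  | base =>
    obtain ⟨rfl, _, _, _, hderiv⟩ := hD
    refine (sub_self (D 1 a) ▸ Filter.Tendsto.sub_const hderiv (D 1 a)).congr' ?_
    filter_upwards [self_mem_nhdsWithin] with x (hx : x ≠ a)
    simp only [taylorSum, Finset.sum_range_succ, Finset.sum_range_zero]
    field_simp [sub_ne_zero.2 hx]
    ring
  | succ n hn ih =>
    refine tendsto_div_pow_succ_of_hasDerivO hlub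
      (R' := fun x => D 1 x - taylorSum (fun k => D (k + 1)) a n x) ?_ ?_ ?_ (ih (hD.tail hn))
    · rw [taylorSum_self, hD.1, sub_self]
    · rw [taylorSum_self, sub_self]
    · filter_upwards [hD.eventually_hasDerivO hn] with x hx
      exact hx.sub (hasDerivO_taylorSum D a n x)

end Peano

section Classes

variable {F : Type*} [Field F] [LinearOrder F] [IsStrictOrderedRing F]

/-- For `x > 0` in `L`, the class of `x` lies between `c / (n + 1)` and `c / n`, where `c` is the
missing supremum of `L` and `n` the largest integer with `n * x ∈ L`. -/
def cutSetoid (L : Set F) : Setoid F where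
  r x y := ∀ n : ℕ, (n * x ∈ L ↔ n * y ∈ L)
  iseqv := ⟨fun _ _ => Iff.rfl, fun h n => (h n).symm, fun h₁ h₂ n => (h₁ n).trans (h₂ n)⟩

theorem IsLowerSet.exists_forall_nat_mul_notMem [Archimedean F] {L : Set F} {b : F}
    (hL : IsLowerSet L) (hb : b ∉ L) {x : F} (hx : 0 < x) : ∃ N : ℕ, ∀ n ≥ N, (n : F) * x ∉ L := by
  obtain ⟨N, hN⟩ := exists_nat_gt (b / x)
  refine ⟨N, fun n hn hnx => hb (hL ?_ hnx)⟩
  calc b ≤ N * x := ((div_lt_iff₀ hx).1 hN).le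
    _ ≤ n * x := by gcongr

theorem cutSetoid_pos [Archimedean F] {L : Set F} {b : F} (hL : IsLowerSet L) (h0 : 0 ∈ L)
    (hb : b ∉ L) {x y : F} (hxy : cutSetoid L x y) (hx : 0 < x) : 0 < y := by
  by_contra! hy
  obtain ⟨N, hN⟩ := hL.exists_forall_nat_mul_notMem hb hx
  exact hN N le_rfl ((hxy N).2 (hL (mul_nonpos_of_nonneg_of_nonpos (Nat.cast_nonneg N) hy) h0))

theorem cutSetoid_lt_two_mul [Archimedean F] {L : Set F} {b : F} (hL : IsLowerSet L)
    (hb : b ∉ L) {x y : F} (hx : 0 < x) (hxL : x ∈ L) (hyx : cutSetoid L y x) : y < 2 * x := by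
  by_contra! hy
  obtain ⟨N, hN⟩ := hL.exists_forall_nat_mul_notMem hb hx
  have hpow : ∀ k : ℕ, ((2 ^ k : ℕ) : F) * x ∈ L := by
    intro k
    induction k with
    | zero => simpa using hxL
    | succ k ih =>
      refine hL ?_ ((hyx _).2 ih)
      push_cast
      rw [pow_succ, mul_assoc]
      exact mul_le_mul_of_nonneg_left hy (by positivity)
  exact hN _ N.lt_two_pow_self.le (hpow N)

/-- On positive elements, the classes are the Archimedean classes. -/
def galaxySetoid : Setoid F where
  r x y := ∃ m : ℕ, x ≤ m * y ∧ y ≤ m * x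
  iseqv := by
    refine ⟨fun x => ⟨1, by simp, by simp⟩, fun ⟨m, h₁, h₂⟩ => ⟨m, h₂, h₁⟩, ?_⟩
    rintro x y z ⟨m, h₁, h₂⟩ ⟨k, h₃, h₄⟩
    refine ⟨m * k, ?_, ?_⟩ <;> push_cast
    · nlinarith [mul_le_mul_of_nonneg_left h₃ (Nat.cast_nonneg (α := F) m)]
    · nlinarith [mul_le_mul_of_nonneg_left h₂ (Nat.cast_nonneg (α := F) k)]

theorem galaxySetoid_pos {x y : F} (hxy : galaxySetoid x y) (hx : 0 < x) : 0 < y := by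
  obtain ⟨m, h, -⟩ := hxy
  by_contra! hy
  linarith [mul_nonpos_of_nonneg_of_nonpos (Nat.cast_nonneg (α := F) m) hy]

theorem exists_pos_forall_nat_mul_lt_one (h : ¬Archimedean F) :
    ∃ t : F, 0 < t ∧ ∀ n : ℕ, n * t < 1 := by
  obtain ⟨x, hx⟩ : ∃ x : F, ∀ n : ℕ, (n : F) ≤ x := by simpa [archimedean_iff_nat_lt] using h
  have hx0 : 0 ≤ x := by simpa using hx 0
  refine ⟨(x + 1)⁻¹, by positivity, fun n => ?_⟩
  rw [← div_eq_mul_inv, div_lt_one (by positivity)]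
  linarith [hx n]

end Classes

section Counterexample

variable {F : Type*} [Field F] [LinearOrder F] [IsStrictOrderedRing F] [TopologicalSpace F]
  [OrderTopology F]

def IsPeanoCounterexample (f : F → F) : Prop :=
  f 0 = 0 ∧ (∀ x, HasDerivO f 0 x) ∧ ∃ᶠ x in 𝓝[≠] 0, f x = x ^ 2

theorem IsPeanoCounterexample.not_tendsto_taylorSum {f : F → F} (hf : IsPeanoCounterexample f) :
    ∃ D : ℕ → F → F, HasNDerivAt 2 f D 0 ∧
      ¬Tendsto (fun x => (f x - taylorSum D 0 2 x) / (x - 0) ^ 2) (𝓝[≠] 0) (𝓝 0) := by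
  obtain ⟨hf0, hf', hfreq⟩ := hf
  refine ⟨fun k => if k = 0 then f else 0, ⟨rfl, univ, univ_mem, ?_, ?_⟩, fun htend => ?_⟩
  · intro k hk x _
    obtain rfl : k = 0 := by omega
    exact hf' x
  · exact hasDerivO_zero_of_eventually_eq (Eventually.of_forall fun _ => rfl)
  · have hlt : ∀ᶠ x in 𝓝[≠] (0 : F), x ≠ 0 ∧ f x / x ^ 2 < 1 := by
      filter_upwards [self_mem_nhdsWithin, htend.eventually (gt_mem_nhds one_pos)] with x hx h
      refine ⟨hx, ?_⟩
      simpa [taylorSum, Finset.sum_range_succ, hf0] using h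
    obtain ⟨x, ⟨hx, hlt⟩, hfx⟩ := (hlt.and_frequently hfreq).exists
    rw [hfx, div_self (pow_ne_zero 2 hx)] at hlt
    exact lt_irrefl 1 hlt

theorem exists_isPeanoCounterexample_of_setoid (s : Setoid F)
    (hopen : ∀ x, 0 < x → ∀ᶠ y in 𝓝 x, s y x) (hpos : ∀ x y, s x y → 0 < x → 0 < y)
    (hsmall : ∀ ε > 0, ∀ᶠ x in 𝓝[>] (0 : F), ∀ y, s y x → y ^ 2 < ε * x) :
    ∃ f : F → F, IsPeanoCounterexample f := by
  set r : F → F := fun x => (Quotient.mk s x).out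
  have hr : ∀ x, s (r x) x := Quotient.mk_out
  have hr_eq : ∀ {x y}, s x y → r x = r y := fun h => congrArg Quotient.out (Quotient.sound h)
  have hr_pos : ∀ x, 0 < x → 0 < r x := fun x hx => hpos x (r x) (s.symm (hr x)) hx
  refine ⟨fun x => if 0 < x then r x ^ 2 else 0, by simp, fun x => ?_, ?_⟩
  · rcases lt_trichotomy x 0 with hx | rfl | hx
    · refine hasDerivO_zero_of_eventually_eq ?_
      filter_upwards [gt_mem_nhds hx] with y hy
      simp [hy.not_gt, hx.not_gt]
    · rw [HasDerivO, LinearOrderedAddCommGroup.tendsto_nhds]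
      intro ε hε
      filter_upwards [eventually_nhdsWithin_of_eventually_nhds
        (eventually_nhdsWithin_iff.1 (hsmall ε hε)), self_mem_nhdsWithin] with y hy (hy0 : y ≠ 0)
      rcases hy0.lt_or_gt with hneg | hpos'
      · simp [hneg.not_gt, hε]
      · simp only [if_pos hpos', lt_irrefl, if_false, sub_zero]
        rw [abs_of_pos (div_pos (pow_pos (hr_pos y hpos') 2) hpos'), div_lt_iff₀ hpos']
        exact hy hpos' _ (hr y)
    · refine hasDerivO_zero_of_eventually_eq ?_
      filter_upwards [lt_mem_nhds hx, hopen x hx] with y hy hyx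
      simp [hy, hx, hr_eq hyx]
  · have hr_tendsto : Tendsto r (𝓝[>] 0) (𝓝[>] 0) := by
      refine tendsto_nhdsWithin_iff.2 ⟨?_, eventually_nhdsWithin_of_forall hr_pos⟩
      rw [LinearOrderedAddCommGroup.tendsto_nhds]
      intro ε hε
      filter_upwards [hsmall ε hε, Ioo_mem_nhdsGT hε] with x hx hxε
      rw [sub_zero, abs_of_pos (hr_pos x hxε.1)]
      refine lt_of_pow_lt_pow_left₀ 2 hε.le ((hx _ (hr x)).trans ?_)
      rw [sq]
      exact mul_lt_mul_of_pos_left hxε.2 hε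
    refine (hr_tendsto.frequently (Eventually.frequently ?_)).filter_mono
      (nhdsWithin_mono _ fun x hx => ne_of_gt hx)
    filter_upwards [self_mem_nhdsWithin] with x (hx : 0 < x)
    simp [hr_pos x hx, hr_eq (hr x)]

theorem eventually_cutSetoid [Archimedean F] {L : Set F} {b : F} (hL : IsClopen L)
    (hL' : IsLowerSet L) (hb : b ∉ L) {x : F} (hx : 0 < x) : ∀ᶠ y in 𝓝 x, cutSetoid L y x := by
  obtain ⟨N, hN⟩ := hL'.exists_forall_nat_mul_notMem hb (half_pos hx)
  have hfar : ∀ n ≥ N, ∀ y, x / 2 ≤ y → (n : F) * y ∉ L :=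
    fun n hn y hy hny => hN n hn (hL' (by gcongr) hny)
  filter_upwards [lt_mem_nhds (half_lt_self hx), (Finset.range N).eventually_all.2 fun n _ =>
    ((continuous_const_mul (n : F)).tendsto x).eventually (hL.eventually_mem_iff _)]
    with y hy hnear n
  by_cases hn : n < N
  · exact hnear n (Finset.mem_range.2 hn)
  · exact iff_of_false (hfar n (not_lt.1 hn) y hy.le) (hfar n (not_lt.1 hn) x (half_le_self hx.le))

theorem exists_isPeanoCounterexample_of_archimedean [Archimedean F] {L : Set F} {b : F}
    (hL : IsClopen L) (hL' : IsLowerSet L) (h0 : 0 ∈ L) (hb : b ∉ L) :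
    ∃ f : F → F, IsPeanoCounterexample f := by
  refine exists_isPeanoCounterexample_of_setoid (cutSetoid L)
    (fun x hx => eventually_cutSetoid hL hL' hb hx)
    (fun x y hxy hx => cutSetoid_pos hL' h0 hb hxy hx) fun ε hε => ?_
  filter_upwards [eventually_nhdsWithin_of_eventually_nhds (hL.isOpen.mem_nhds h0),
    Ioo_mem_nhdsGT (by positivity : 0 < ε / 4)] with x hxL hx y hyx
  have hy := cutSetoid_pos hL' h0 hb ((cutSetoid L).symm hyx) hx.1
  have h2 := cutSetoid_lt_two_mul hL' hb hx.1 hxL hyx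
  nlinarith [hx.1, hx.2]

theorem exists_isClopen_isLowerSet_of_not_isLUB {A : Set F} (hA : A.Nonempty) (hbdd : BddAbove A)
    (hno : ∀ s, ¬IsLUB A s) :
    ∃ L : Set F, IsClopen L ∧ IsLowerSet L ∧ (0 : F) ∈ L ∧ ∃ b, b ∉ L := by
  obtain ⟨a₀, ha₀⟩ := hA
  obtain ⟨b, hb⟩ := hbdd
  set L₀ := {q : F | ∃ a ∈ A, q < a}
  have hopen : IsOpen L₀ := isOpen_iff_mem_nhds.2 fun q ⟨a, ha, hqa⟩ =>
    mem_of_superset (Iio_mem_nhds hqa) fun y hy => ⟨a, ha, hy⟩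
  have hclosed : IsClosed L₀ := by
    refine isOpen_compl_iff.1 (isOpen_iff_mem_nhds.2 fun q hq => ?_)
    have hub : q ∈ upperBounds A := fun a ha => not_lt.1 fun hqa => hq ⟨a, ha, hqa⟩
    obtain ⟨v, hv, hvq⟩ : ∃ v ∈ upperBounds A, v < q := by
      by_contra! h
      exact hno q ⟨hub, h⟩
    exact mem_of_superset (Ioi_mem_nhds hvq) fun y hy ⟨a, ha, hya⟩ =>
      (hv ha).not_gt (hy.trans hya)
  refine ⟨(· + (a₀ - 1)) ⁻¹' L₀, IsClopen.preimage ⟨hclosed, hopen⟩ (continuous_add_const _),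
    fun x y hxy ⟨a, ha, h⟩ => ⟨a, ha, by linarith⟩, ⟨a₀, ha₀, by linarith⟩, b - (a₀ - 1),
    fun ⟨a, ha, h⟩ => ?_⟩
  linarith [hb ha]

theorem exists_isPeanoCounterexample_of_not_archimedean (h : ¬Archimedean F) :
    ∃ f : F → F, IsPeanoCounterexample f := by
  obtain ⟨t, ht, htn⟩ := exists_pos_forall_nat_mul_lt_one h
  refine exists_isPeanoCounterexample_of_setoid galaxySetoid (fun x hx => ?_)
    (fun x y => galaxySetoid_pos) fun ε hε => ?_
  · filter_upwards [Ioo_mem_nhds (half_lt_self hx) (lt_two_mul_self hx)] with y hy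
    exact ⟨2, by push_cast; linarith [hy.2], by push_cast; linarith [hy.1]⟩
  · filter_upwards [Ioo_mem_nhdsGT (mul_pos hε ht)] with x hx y hyx
    have hy := galaxySetoid_pos (galaxySetoid.symm hyx) hx.1
    obtain ⟨m, hym, -⟩ := hyx
    have hm : ((m * m : ℕ) : F) * x < ε :=
      calc ((m * m : ℕ) : F) * x ≤ (m * m : ℕ) * (ε * t) := by gcongr; exact hx.2.le
        _ = ε * ((m * m : ℕ) * t) := by ring
        _ < ε * 1 := by gcongr; exact htn _
        _ = ε := mul_one ε
    calc y ^ 2 ≤ (m * x) ^ 2 := pow_le_pow_left₀ hy.le hym 2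
      _ = ((m * m : ℕ) * x) * x := by push_cast; ring
      _ < ε * x := mul_lt_mul_of_pos_right hm hx.1

end Counterexample

/-- an ordered field satisfies the least upper bound property iff
Taylor's Theorem with Peano remainder holds in it. -/
theorem stmt_17 {F : Type*} [Field F] [LinearOrder F] [IsStrictOrderedRing F] [TopologicalSpace F] [OrderTopology F] :
    (∀ A : Set F, A.Nonempty → BddAbove A → ∃ s, IsLUB A s) ↔
    (∀ n : ℕ, 1 ≤ n → ∀ (f : F → F) (D : ℕ → F → F) (a : F), HasNDerivAt n f D a →
      Tendsto
        (fun x => (f x - ∑ k ∈ Finset.range (n + 1),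
          D k a / (Nat.factorial k : F) * (x - a) ^ k) / (x - a) ^ n)
        (𝓝[≠] a) (𝓝 0)) := by
  refine ⟨fun hlub n hn f D a hD => tendsto_taylorSum_peano hlub hn hD, fun hT A hA hbdd => ?_⟩
  by_contra! hno
  obtain ⟨f, hf⟩ : ∃ f : F → F, IsPeanoCounterexample f := by
    by_cases harch : Archimedean F
    · obtain ⟨L, hL, hL', h0, b, hb⟩ := exists_isClopen_isLowerSet_of_not_isLUB hA hbdd hno
      exact exists_isPeanoCounterexample_of_archimedean hL hL' h0 hb
    · exact exists_isPeanoCounterexample_of_not_archimedean harch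
  obtain ⟨D, hD, hnot⟩ := hf.not_tendsto_taylorSum
  exact hnot (hT 2 one_le_two f D 0 hD)
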